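/- (False-positive rate bound) Let Ω be a probability space, let C* : Ω → ℝ (observed cost) and Ĉ₁,...,Ĉ_M : Ω → ℝ be random variables where the Ĉ_j are i.i.d., independent of C*, with P(Ĉ_j ≥ c_a) = p for a fixed threshold c_a ∈ ℝ. Let Ĉ^{(M−n)} denote the (M−n)-th order statistic of Ĉ₁,...,Ĉ_M. Then P(C* ≥ Ĉ^{(M−n)} ∧ C* < c_a) ≤ ∑_{i=0}^{n} C(M,i) p^i (1−p)^{M−i}. -/

import Mathlib

open MeasureTheory ProbabilityTheory Finset

/-- The `k`-th smallest value (0-indexed) among `f 0, …, f (M-1)`. -/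
noncomputable def orderStat {M : ℕ} (f : Fin M → ℝ) (k : Fin M) : ℝ :=
  f (Tuple.sort f k)

/-! If `C* ≥ Ĉ^{(M−n)}` and `C* < c_a`, then the `M − n` smallest predicted costs all lie below
`c_a`, so at most `n` of the `Ĉⱼ` reach `c_a`. By independence, the set of indices `j` with
`c_a ≤ Ĉⱼ` equals a given `S` with probability `p^|S| (1 − p)^(M − |S|)`, so the number of such
indices is `Binomial(M, p)` and the event has probability at most its CDF at `n`. -/

open scoped ENNReal

theorem card_filter_le_sub_of_orderStat_lt {M : ℕ} (f : Fin M → ℝ) (k : Fin M) {c : ℝ}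
    (h : orderStat f k < c) : #{j | c ≤ f j} ≤ M - (k + 1) := by
  set T := (Iic k).map (Tuple.sort f).toEmbedding
  have hT : #T = k + 1 := by rw [card_map, Fin.card_Iic]
  have hdisj : Disjoint ({j | c ≤ f j} : Finset (Fin M)) T := by
    refine disjoint_left.2 fun j hj hjT => ?_
    obtain ⟨i, hi, rfl⟩ := mem_map.1 hjT
    have : f (Tuple.sort f i) ≤ orderStat f k := Tuple.monotone_sort f (mem_Iic.1 hi)
    exact (mem_filter.1 hj).2.not_gt (this.trans_lt h)
  have hunion := card_union_of_disjoint hdisj ▸ card_le_univ (_ ∪ T)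
  rw [Fintype.card_fin] at hunion
  omega

section Binomial

variable {Ω ι : Type*} [Fintype ι]

theorem setOf_card_filter_le_eq_biUnion (X : ι → Ω → ℝ) (c : ℝ) (i : ℕ) :
    {ω | #{j | c ≤ X j ω} = i}
      = ⋃ S ∈ powersetCard i (univ : Finset ι), {ω | ({j | c ≤ X j ω} : Finset ι) = S} := by
  ext ω
  simp [mem_powersetCard]

variable [DecidableEq ι]

theorem setOf_filter_le_eq_iInter (X : ι → Ω → ℝ) (c : ℝ) (S : Finset ι) :
    {ω | ({j | c ≤ X j ω} : Finset ι) = S}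
      = ⋂ j ∈ (univ : Finset ι), X j ⁻¹' (if j ∈ S then Set.Ici c else (Set.Ici c)ᶜ) := by
  ext ω
  simp only [Finset.ext_iff, mem_filter, mem_univ, true_and, Set.mem_ofPred_eq, Set.mem_iInter,
    forall_const]
  refine forall_congr' fun j => ?_
  split_ifs with hj <;> simp [hj]

variable [MeasurableSpace Ω] {X : ι → Ω → ℝ} {c : ℝ}

theorem measurableSet_setOf_filter_le_eq (hmeas : ∀ j, Measurable (X j)) (S : Finset ι) :
    MeasurableSet {ω | ({j | c ≤ X j ω} : Finset ι) = S} := by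
  rw [setOf_filter_le_eq_iInter]
  refine .biInter (Set.to_countable _) fun j _ => hmeas j ?_
  split_ifs
  exacts [measurableSet_Ici, measurableSet_Ici.compl]

theorem measurableSet_setOf_card_filter_le_eq (hmeas : ∀ j, Measurable (X j)) (i : ℕ) :
    MeasurableSet {ω | #{j | c ≤ X j ω} = i} := by
  rw [setOf_card_filter_le_eq_biUnion]
  exact .biUnion (Set.to_countable _) fun S _ => measurableSet_setOf_filter_le_eq hmeas S

variable {P : Measure Ω} [IsProbabilityMeasure P] {q : ℝ≥0∞}

theorem measure_setOf_filter_le_eq (hmeas : ∀ j, Measurable (X j)) (hind : iIndepFun X P)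
    (hq : ∀ j, P {ω | c ≤ X j ω} = q) (S : Finset ι) :
    P {ω | ({j | c ≤ X j ω} : Finset ι) = S} = q ^ #S * (1 - q) ^ (Fintype.card ι - #S) := by
  have hlt : ∀ j, P (X j ⁻¹' (Set.Ici c)ᶜ) = 1 - q := fun j => by
    rw [Set.preimage_compl, prob_compl_eq_one_sub (hmeas j measurableSet_Ici), ← hq j]; rfl
  rw [setOf_filter_le_eq_iInter, hind.measure_inter_preimage_eq_mul _
      (sets := fun j => if j ∈ S then Set.Ici c else (Set.Ici c)ᶜ) fun j _ => by
        split_ifs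
        exacts [measurableSet_Ici, measurableSet_Ici.compl]]
  have hfactor : ∀ j, P (X j ⁻¹' if j ∈ S then Set.Ici c else (Set.Ici c)ᶜ)
      = if j ∈ S then q else 1 - q := fun j => by
    split_ifs
    exacts [hq j, hlt j]
  rw [prod_congr rfl fun j _ => hfactor j]
  rw [prod_ite, prod_const, prod_const, filter_mem_eq_inter, univ_inter, filter_notMem_eq_sdiff,
    ← compl_eq_univ_sdiff, card_compl]

theorem measure_setOf_card_filter_le_eq (hmeas : ∀ j, Measurable (X j)) (hind : iIndepFun X P)
    (hq : ∀ j, P {ω | c ≤ X j ω} = q) (i : ℕ) :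
    P {ω | #{j | c ≤ X j ω} = i}
      = (Fintype.card ι).choose i * (q ^ i * (1 - q) ^ (Fintype.card ι - i)) := by
  rw [setOf_card_filter_le_eq_biUnion, measure_biUnion_finset
    (fun S _ T _ hST => Set.disjoint_left.2 fun ω hS hT => hST (hS.symm.trans hT))
    fun S _ => measurableSet_setOf_filter_le_eq hmeas S]
  rw [sum_congr rfl fun S hS => by
    rw [measure_setOf_filter_le_eq hmeas hind hq, (mem_powersetCard.1 hS).2]]
  rw [sum_const, card_powersetCard, card_univ, nsmul_eq_mul]

theorem measure_setOf_card_filter_le_le (hmeas : ∀ j, Measurable (X j)) (hind : iIndepFun X P)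
    (hq : ∀ j, P {ω | c ≤ X j ω} = q) (n : ℕ) :
    P {ω | #{j | c ≤ X j ω} ≤ n} = ∑ i ∈ range (n + 1),
      (Fintype.card ι).choose i * (q ^ i * (1 - q) ^ (Fintype.card ι - i)) := by
  have hunion : {ω | #{j | c ≤ X j ω} ≤ n} = ⋃ i ∈ range (n + 1), {ω | #{j | c ≤ X j ω} = i} := by
    ext ω
    simp
  rw [hunion, measure_biUnion_finset
    (fun i _ k _ hik => Set.disjoint_left.2 fun ω hi hk => hik (hi.symm.trans hk))
    fun i _ => measurableSet_setOf_card_filter_le_eq hmeas i]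
  exact sum_congr rfl fun i _ => measure_setOf_card_filter_le_eq hmeas hind hq i

end Binomial

theorem ofReal_sum_choose_mul_pow_mul_pow {p : ℝ} (hp0 : 0 ≤ p) (hp1 : p ≤ 1) (M n : ℕ) :
    ENNReal.ofReal (∑ i ∈ range (n + 1), (M.choose i : ℝ) * p ^ i * (1 - p) ^ (M - i))
      = ∑ i ∈ range (n + 1),
          M.choose i * (ENNReal.ofReal p ^ i * (1 - ENNReal.ofReal p) ^ (M - i)) := by
  have hq0 : 0 ≤ 1 - p := sub_nonneg.2 hp1
  rw [ENNReal.ofReal_sum_of_nonneg fun i _ => by positivity]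
  refine sum_congr rfl fun i _ => ?_
  rw [ENNReal.ofReal_mul (by positivity), ENNReal.ofReal_mul (by positivity),
    ENNReal.ofReal_pow hp0, ENNReal.ofReal_pow hq0, ENNReal.ofReal_natCast, mul_assoc,
    ← ENNReal.ofReal_one, ← ENNReal.ofReal_sub 1 hp0]

/-- False-positive rate bound: if the predicted costs `Ĉ₁,…,Ĉ_M` are i.i.d. with
`P(Ĉⱼ ≥ c_a) = p` and independent of the observed cost `C*`, then
`P(C* ≥ Ĉ^{(M−n)} ∧ C* < c_a) ≤ ∑_{i=0}^{n} C(M,i) pⁱ (1-p)^{M-i}`. -/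
theorem stmt2 {Ω : Type*} [MeasurableSpace Ω] (P : Measure Ω) [IsProbabilityMeasure P]
    (M n : ℕ) (hM : 1 ≤ M)
    (p : ℝ) (hp : p ∈ Set.Icc (0 : ℝ) 1) (c_a : ℝ)
    (Cstar : Ω → ℝ) (Chat : Fin M → Ω → ℝ)
    (hmeas : ∀ j, Measurable (Chat j))
    (hind : iIndepFun Chat P)
    (hquant : ∀ j, P {ω | c_a ≤ Chat j ω} = ENNReal.ofReal p) :
    P {ω | orderStat (fun j => Chat j ω) ⟨M - n - 1, by omega⟩ ≤ Cstar ω ∧ Cstar ω < c_a}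
      ≤ ENNReal.ofReal (∑ i ∈ Finset.range (n + 1),
          (M.choose i : ℝ) * p ^ i * (1 - p) ^ (M - i)) := by
  obtain ⟨hp0, hp1⟩ := hp
  have hsub : {ω | orderStat (fun j => Chat j ω) ⟨M - n - 1, by omega⟩ ≤ Cstar ω ∧ Cstar ω < c_a}
      ⊆ {ω | #{j | c_a ≤ Chat j ω} ≤ n} := fun ω ⟨hle, hlt⟩ => by
    have hcard := card_filter_le_sub_of_orderStat_lt _ _ (hle.trans_lt hlt)
    simp only [Set.mem_ofPred_eq]
    rw [Fin.val_mk] at hcard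
    omega
  calc _ ≤ P {ω | #{j | c_a ≤ Chat j ω} ≤ n} := measure_mono hsub
    _ = ∑ i ∈ range (n + 1),
          M.choose i * (ENNReal.ofReal p ^ i * (1 - ENNReal.ofReal p) ^ (M - i)) := by
      simpa using measure_setOf_card_filter_le_le hmeas hind hquant n
    _ = _ := (ofReal_sum_choose_mul_pow_mul_pow hp0 hp1 M n).symm
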